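/- Let 1 ≤ k ≤ n. The map δ_{m+k} : dk_{m,n} → dk_{m,n+1} sends the ideal [c,c] into the corresponding ideal of dk_{m,n+1} and hence induces a Lie algebra homomorphism δ_{m+k} : edk_{m,n} → edk_{m,n+1}. For u ∈ lie_m: δ_{m+k}(u_i) = u_i if i < k; δ_{m+k}(u_k) = u_k + u_{k+1} + (R(u))_{k(k+1)}, where R denotes the restriction of μ_gr (with N = m) to lie_m; and δ_{m+k}(u_i) = u_{i+1} if i > k. For w ∈ ass_m and 1 ≤ i < j ≤ n: δ_{m+k}(w_{ij}) = w_{ij} if j < k; w_{ik} + w_{i(k+1)} if j = k; w_{i(j+1)} if i < k < j; w_{k(j+1)} + w_{(k+1)(j+1)} if i = k; and w_{(i+1)(j+1)} if k < i. -/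

import Mathlib

noncomputable section

open scoped TensorProduct

attribute [local instance] LieRing.ofAssociativeRing

/-- The free unital associative algebra over `ℚ` on `N` generators. -/
abbrev Ass (N : ℕ) : Type := FreeAlgebra ℚ (Fin N)

/-- The `i`-th generator `x_i`. -/
def gen {N : ℕ} (i : Fin N) : Ass N := FreeAlgebra.ι ℚ i

/-- The monomial (word) associated to a list of generator indices. -/
def wordProd {N : ℕ} (l : List (Fin N)) : Ass N := (l.map gen).prod

/-- Extend a function on words (monomials) to a `ℚ`-linear map on the free algebra,
using the monomial basis. -/
def liftWord {N : ℕ} {A : Type} [AddCommGroup A] [Module ℚ A]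
    (f : List (Fin N) → A) : Ass N →ₗ[ℚ] A :=
  (FreeAlgebra.basisFreeMonoid ℚ (Fin N)).constr ℚ fun w => f w.toList

/-- `μ_gr` on a word. -/
def muWord {N : ℕ} : List (Fin N) → Ass N
  | [] => 0
  | [_] => 0
  | a :: b :: t => (if a = b then -(wordProd (a :: t)) else 0) + gen a * muWord (b :: t)

/-- The linearized self-intersection operation `μ_gr`. -/
def muGr (N : ℕ) : Ass N →ₗ[ℚ] Ass N := liftWord muWord

/-- The antipode: the anti-automorphism `ι` with `ι(x_i) = -x_i`, as a linear map. -/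
def iotaMap (N : ℕ) : Ass N →ₗ[ℚ] Ass N :=
  liftWord fun l => ((-1 : ℚ) ^ l.length) • wordProd l.reverse

/-- The (right) partial derivative `∂_i`, characterized on `lie_N` by
`a = Σ_i (∂_i a) x_i`. -/
def partialD {N : ℕ} (i : Fin N) : Ass N →ₗ[ℚ] Ass N :=
  liftWord fun l =>
    match l.getLast? with
    | some a => if a = i then wordProd l.dropLast else 0
    | none => 0

/-- `η_gr` on a pair of words. -/
def etaWord {N : ℕ} (l r : List (Fin N)) : Ass N :=
  match l.getLast?, r with
  | some a, b :: t => if a = b then -(wordProd (l.dropLast ++ a :: t)) else 0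
  | _, _ => 0

/-- The linearized homotopy intersection form `η_gr`. -/
def etaGr (N : ℕ) : Ass N →ₗ[ℚ] Ass N →ₗ[ℚ] Ass N :=
  liftWord fun l => liftWord fun r => etaWord l r

/-- Degree-`k` homogeneous part of a free algebra (word-length grading). -/
def homogS (X : Type) (k : ℕ) : Submodule ℚ (FreeAlgebra ℚ X) :=
  Submodule.span ℚ {z | ∃ l : List X, l.length = k ∧ z = (l.map (FreeAlgebra.ι ℚ)).prod}

/-- The projection onto the degree-`k` homogeneous component. -/
def homogComp {N : ℕ} (k : ℕ) : Ass N →ₗ[ℚ] Ass N :=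
  liftWord fun l => if l.length = k then wordProd l else 0

/-- The free Lie algebra on `x_1, …, x_N`, as the Lie subalgebra of `Ass N`
(with the commutator bracket) generated by the generators. -/
def lieN (N : ℕ) : LieSubalgebra ℚ (Ass N) :=
  LieSubalgebra.lieSpan ℚ (Ass N) (Set.range (gen (N := N)))

/-- The generator `x_i` as an element of `lie_N`. -/
def genL (N : ℕ) (i : Fin N) : lieN N :=
  ⟨gen i, LieSubalgebra.subset_lieSpan ⟨i, rfl⟩⟩

/-- Substitution: the algebra endomorphism of `ass_2` with `x ↦ p`, `y ↦ q`. -/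
def sub2 (p q : Ass 2) : Ass 2 →ₐ[ℚ] Ass 2 := FreeAlgebra.lift ℚ ![p, q]

/-- `x`. -/
def xA : Ass 2 := gen 0
/-- `y`. -/
def yA : Ass 2 := gen 1

/-- Equation (E1): `φ(y,0) − φ(x+y,0) = 0`. -/
def E1 (φ : Ass 2) : Prop := sub2 yA 0 φ - sub2 (xA + yA) 0 φ = 0

/-- Equation (E2): `(∂_y φ) + (∂_y φ)(y,0) − (∂_y φ)(x+y,0) − R(φ) = 0`,
where `R` is the restriction of `μ_gr` to `lie_2`. -/
def E2 (φ : Ass 2) : Prop :=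
  partialD 1 φ + sub2 yA 0 (partialD 1 φ) - sub2 (xA + yA) 0 (partialD 1 φ) - muGr 2 φ = 0

/-- Equation (E3): `[x, φ(y,x)] + [y, φ(x,y)] = 0`. -/
def E3 (φ : Ass 2) : Prop := ⁅xA, sub2 yA xA φ⁆ + ⁅yA, φ⁆ = 0

/-- `ν^em(φ) = (φ(y,x), φ(x,y))`. -/
def nuEm (φ : Ass 2) : Fin 2 → Ass 2 := ![sub2 yA xA φ, φ]

/-- The space `grt_1^em` of solutions to the linearized emergent equations. -/
def grt1em : Set (Ass 2) := {φ | φ ∈ lieN 2 ∧ E1 φ ∧ E2 φ ∧ E3 φ}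

/-- The derivation `ρ(ũ)` on a word. -/
def rhoWord {N : ℕ} (u : Fin N → Ass N) : List (Fin N) → Ass N
  | [] => 0
  | a :: t => ⁅gen a, u a⁆ * wordProd t + gen a * rhoWord u t

/-- The tangential derivation `ρ(ũ)`, determined by `ρ(ũ)(x_i) = [x_i, u_i]`. -/
def rho {N : ℕ} (u : Fin N → Ass N) : Ass N →ₗ[ℚ] Ass N := liftWord (rhoWord u)

/-- The span of commutators in `ass_N`. -/
def trRel (N : ℕ) : Submodule ℚ (Ass N) :=
  Submodule.span ℚ {z | ∃ a b : Ass N, z = a * b - b * a}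

/-- The trace space `tr_N = ass_N/[ass_N, ass_N]`. -/
abbrev Tr (N : ℕ) : Type := Ass N ⧸ trRel N

/-- The projection `|·| : ass_N → tr_N`. -/
def trM (N : ℕ) : Ass N →ₗ[ℚ] Tr N := (trRel N).mkQ

/-- The divergence `div(ũ) = Σ_i |x_i (∂_i u_i)|`. -/
def divergence {N : ℕ} (u : Fin N → Ass N) : Tr N :=
  ∑ i, trM N (gen i * partialD i (u i))

/-- `ũ ∈ tder_N`: all components lie in `lie_N`. -/
def IsTDer {N : ℕ} (u : Fin N → Ass N) : Prop := ∀ i, u i ∈ lieN N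

/-- `ũ ∈ sder_N`. -/
def IsSDer {N : ℕ} (u : Fin N → Ass N) : Prop := IsTDer u ∧ rho u (∑ i, gen i) = 0

/-- `ũ ∈ krv_N`. -/
def IsKRV {N : ℕ} (u : Fin N → Ass N) : Prop :=
  IsSDer u ∧ ∃ f : Fin (N + 1) → Polynomial ℚ,
    divergence u =
      trM N (Polynomial.aeval (∑ i, gen i) (f 0)) +
        ∑ i : Fin N, trM N (Polynomial.aeval (gen i) (f i.succ))

/-- `ũ ∈ krv_N^0`. -/
def IsKRV0 {N : ℕ} (u : Fin N → Ass N) : Prop :=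
  IsSDer u ∧ ∃ cf : Fin N → ℚ, divergence u = ∑ i, cf i • trM N (gen i)

/-- The swap `u(x,y) ↦ u(y,x)`. -/
def swapA : Ass 2 →ₐ[ℚ] Ass 2 := sub2 yA xA

/-- `ũ ∈ krv_2^sym`. -/
def IsKRVsym (u : Fin 2 → Ass 2) : Prop := IsKRV u ∧ u 1 = swapA (u 0)


/-- The coproduct `Δ` on `ass_N`, with `Δ(x_i) = x_i ⊗ 1 + 1 ⊗ x_i`. -/
def comulA (N : ℕ) : Ass N →ₐ[ℚ] (Ass N ⊗[ℚ] Ass N) :=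
  FreeAlgebra.lift ℚ fun i => gen i ⊗ₜ[ℚ] (1 : Ass N) + (1 : Ass N) ⊗ₜ[ℚ] gen i

/-- `μ_{r,gr} = ((|·|∘mult) ⊗ id) ∘ (id ⊗ ((ι ⊗ id) ∘ Δ)) ∘ (id ⊗ μ_gr) ∘ Δ`. -/
def muR (N : ℕ) : Ass N →ₗ[ℚ] Tr N ⊗[ℚ] Ass N :=
  (TensorProduct.map ((trM N).comp (LinearMap.mul' ℚ (Ass N))) LinearMap.id).comp <|
    ((TensorProduct.assoc ℚ (Ass N) (Ass N) (Ass N)).symm.toLinearMap).comp <|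
      (TensorProduct.map LinearMap.id
          ((TensorProduct.map (iotaMap N) LinearMap.id).comp (comulA N).toLinearMap)).comp <|
        (TensorProduct.map LinearMap.id (muGr N)).comp (comulA N).toLinearMap

/-- `Alt(a ⊗ b) = a ⊗ b - b ⊗ a`. -/
def altMap (N : ℕ) : Tr N ⊗[ℚ] Tr N →ₗ[ℚ] Tr N ⊗[ℚ] Tr N :=
  LinearMap.id - (TensorProduct.comm ℚ (Tr N) (Tr N)).toLinearMap

/-- The linearized Turaev cobracket `δ_gr = Alt ∘ (id ⊗ |·|) ∘ μ_{r,gr}`. -/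
def Dgr (N : ℕ) : Ass N →ₗ[ℚ] Tr N ⊗[ℚ] Tr N :=
  (altMap N).comp ((TensorProduct.map LinearMap.id (trM N)).comp (muR N))

/-- Index type of the generators `t_{pq}` (`p ≠ q`) of the Drinfeld–Kohno Lie algebra. -/
def dkGenIdx (N : ℕ) : Type := {pq : Fin N × Fin N // pq.1 ≠ pq.2}

abbrev FLdk (N : ℕ) := FreeLieAlgebra ℚ (dkGenIdx N)

def tFree {N : ℕ} (p q : Fin N) (h : p ≠ q) : FLdk N := FreeLieAlgebra.of ℚ ⟨(p, q), h⟩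

/-- The defining relations of `dk_N`: symmetry, commutation and 4T. -/
def dkRels (N : ℕ) : Set (FLdk N) :=
  {z | ∃ (p q : Fin N) (h : p ≠ q), z = tFree p q h - tFree q p h.symm} ∪
  {z | ∃ (p q r s : Fin N) (hpq : p ≠ q) (hrs : r ≠ s),
      p ≠ r ∧ p ≠ s ∧ q ≠ r ∧ q ≠ s ∧ z = ⁅tFree p q hpq, tFree r s hrs⁆} ∪
  {z | ∃ (p q r : Fin N) (hpq : p ≠ q) (hqr : q ≠ r) (hpr : p ≠ r),
      z = ⁅tFree p q hpq + tFree q r hqr, tFree p r hpr⁆}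

def dkIdeal (N : ℕ) : LieIdeal ℚ (FLdk N) := LieSubmodule.lieSpan ℚ (FLdk N) (dkRels N)

/-- The Drinfeld–Kohno Lie algebra `dk_N`. -/
abbrev dk (N : ℕ) := FLdk N ⧸ dkIdeal N

/-- The generator `t_{pq}` of `dk_N`. -/
def tGen {N : ℕ} (p q : Fin N) (h : p ≠ q) : dk N :=
  LieSubmodule.Quotient.mk (N := dkIdeal N) (tFree p q h)

/-- Index type of the generators of the mixed Drinfeld–Kohno Lie algebra `dk_{m,n}`:
pairs of distinct indices in `Fin (m+n)`, not both poles (i.e., not both `< m`). -/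
def MIdx (m n : ℕ) : Type :=
  {pq : Fin (m + n) × Fin (m + n) // pq.1 ≠ pq.2 ∧ (m ≤ (pq.1 : ℕ) ∨ m ≤ (pq.2 : ℕ))}

abbrev FLmix (m n : ℕ) := FreeLieAlgebra ℚ (MIdx m n)

def tMix {m n : ℕ} (p q : Fin (m + n)) (h : p ≠ q)
    (hm : m ≤ (p : ℕ) ∨ m ≤ (q : ℕ)) : FLmix m n :=
  FreeLieAlgebra.of ℚ ⟨(p, q), h, hm⟩

/-- The defining relations of `dk_{m,n}`: exactly the symmetry, commutation and 4T relations
of `dk_{m+n}` involving only mixed pairs. -/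
def mixRels (m n : ℕ) : Set (FLmix m n) :=
  {z | ∃ (p q : Fin (m + n)) (h : p ≠ q) (hm : m ≤ (p : ℕ) ∨ m ≤ (q : ℕ)),
      z = tMix p q h hm - tMix q p h.symm hm.symm} ∪
  {z | ∃ (p q r s : Fin (m + n)) (hpq : p ≠ q) (hmpq : m ≤ (p : ℕ) ∨ m ≤ (q : ℕ))
      (hrs : r ≠ s) (hmrs : m ≤ (r : ℕ) ∨ m ≤ (s : ℕ)),
      p ≠ r ∧ p ≠ s ∧ q ≠ r ∧ q ≠ s ∧ z = ⁅tMix p q hpq hmpq, tMix r s hrs hmrs⁆} ∪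
  {z | ∃ (p q r : Fin (m + n)) (hpq : p ≠ q) (hmpq : m ≤ (p : ℕ) ∨ m ≤ (q : ℕ))
      (hqr : q ≠ r) (hmqr : m ≤ (q : ℕ) ∨ m ≤ (r : ℕ))
      (hpr : p ≠ r) (hmpr : m ≤ (p : ℕ) ∨ m ≤ (r : ℕ)),
      z = ⁅tMix p q hpq hmpq + tMix q r hqr hmqr, tMix p r hpr hmpr⁆}

def mixIdeal (m n : ℕ) : LieIdeal ℚ (FLmix m n) :=
  LieSubmodule.lieSpan ℚ (FLmix m n) (mixRels m n)

/-- The mixed Drinfeld–Kohno Lie algebra `dk_{m,n}`. -/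
abbrev dkmn (m n : ℕ) := FLmix m n ⧸ mixIdeal m n

lemma castAdd_ne_natAdd {m n : ℕ} (i : Fin m) (j : Fin n) :
    Fin.castAdd n i ≠ Fin.natAdd m j := by
  intro h
  have hv := congrArg Fin.val h
  simp only [Fin.coe_castAdd, Fin.coe_natAdd] at hv
  have := i.isLt
  omega

lemma natAdd_ne {m n : ℕ} {u v : Fin n} (h : u ≠ v) :
    Fin.natAdd m u ≠ Fin.natAdd m v := by
  intro hh
  exact h (by
    have hv := congrArg Fin.val hh
    simp only [Fin.coe_natAdd] at hv
    exact Fin.ext (by omega))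

lemma natAdd_le_left (m : ℕ) {n : ℕ} (j : Fin n) : m ≤ (Fin.natAdd m j : ℕ) := by
  simp only [Fin.coe_natAdd]; omega

/-- The generator `a_{ij}` of `dk_{m,n}` (0-indexed): `a_{ij} = t_{i(m+j)}`. -/
def aG {m n : ℕ} (i : Fin m) (j : Fin n) : dkmn m n :=
  LieSubmodule.Quotient.mk (N := mixIdeal m n)
    (tMix (Fin.castAdd n i) (Fin.natAdd m j) (castAdd_ne_natAdd i j)
      (Or.inr (natAdd_le_left m j)))

/-- The generator `c_{ij}` of `dk_{m,n}` (0-indexed): `c_{ij} = t_{(m+i)(m+j)}`. -/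
def cG {m n : ℕ} (u v : Fin n) (h : u ≠ v) : dkmn m n :=
  LieSubmodule.Quotient.mk (N := mixIdeal m n)
    (tMix (Fin.natAdd m u) (Fin.natAdd m v) (natAdd_ne h)
      (Or.inl (natAdd_le_left m u)))

/-- The Lie ideal `c` of `dk_{m,n}` generated by the `c_{ij}`. -/
def cId (m n : ℕ) : LieIdeal ℚ (dkmn m n) :=
  LieSubmodule.lieSpan ℚ (dkmn m n) {z | ∃ (u v : Fin n) (h : u ≠ v), z = cG u v h}

/-- The Lie ideal `[c,c]`. -/
def ccId (m n : ℕ) : LieIdeal ℚ (dkmn m n) := ⁅cId m n, cId m n⁆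

/-- The emergent Drinfeld–Kohno Lie algebra `edk_{m,n} = dk_{m,n}/[c,c]`. -/
abbrev edk (m n : ℕ) := dkmn m n ⧸ ccId m n

/-- Projection `dk_{m,n} → edk_{m,n}` as a function. -/
def eprojF (m n : ℕ) : dkmn m n → edk m n := LieSubmodule.Quotient.mk (N := ccId m n)

/-- Projection `dk_{m,n} → edk_{m,n}` as a `ℚ`-linear map. -/
def eproj (m n : ℕ) : dkmn m n →ₗ[ℚ] edk m n := (ccId m n).toSubmodule.mkQ

/-- `a_{ij}` in `edk_{m,n}`. -/
def aGE {m n : ℕ} (i : Fin m) (j : Fin n) : edk m n := eprojF m n (aG i j)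

/-- `c_{ij}` in `edk_{m,n}`. -/
def cGE {m n : ℕ} (u v : Fin n) (h : u ≠ v) : edk m n := eprojF m n (cG u v h)

/-- The canonical Lie algebra map `FreeLieAlgebra ℚ (Fin m) → ass_m`,
whose image is `lie_m`. -/
def toAssL (m : ℕ) : FreeLieAlgebra ℚ (Fin m) →ₗ⁅ℚ⁆ FreeAlgebra ℚ (Fin m) :=
  FreeLieAlgebra.lift ℚ (FreeAlgebra.ι ℚ)

/-- `u ↦ u_i` (at `dk` level): the Lie algebra map with `x_p ↦ a_{pi}`. -/
def uEldk {m n : ℕ} (i : Fin n) : FreeLieAlgebra ℚ (Fin m) →ₗ⁅ℚ⁆ dkmn m n :=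
  FreeLieAlgebra.lift ℚ fun p => aG p i

/-- `u ↦ u_i`: the Lie algebra map `lie_m → edk_{m,n}` with `x_p ↦ a_{pi}`. -/
def uEl {m n : ℕ} (i : Fin n) : FreeLieAlgebra ℚ (Fin m) →ₗ⁅ℚ⁆ edk m n :=
  FreeLieAlgebra.lift ℚ fun p => aGE p i

/-- Iterated bracketing `[a_{p₁ j}, [a_{p₂ j}, [… , [a_{p_d j}, ξ]…]]]`. -/
def adWApply {m n : ℕ} (j : Fin n) : List (Fin m) → edk m n → edk m n
  | [], ξ => ξ
  | p :: t, ξ => ⁅aGE p j, adWApply j t ξ⁆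


/-- `w ↦ w_{uv}`: the linear map `ass_m → edk_{m,n}` with
`1 ↦ c_{uv}` and `(x_{p₁}⋯x_{p_d}) ↦ [a_{p₁ v}, [… [a_{p_d v}, c_{uv}]…]]`. -/
def wEl {m n : ℕ} (u v : Fin n) (h : u ≠ v) : Ass m →ₗ[ℚ] edk m n :=
  liftWord fun l => adWApply v l (cGE u v h)

/-- `ad_w^{(l)}(ξ)`, linear in `w`. -/
def adOp {m n : ℕ} (l : Fin n) (ξ : edk m n) : Ass m →ₗ[ℚ] edk m n :=
  liftWord fun lst => adWApply l lst ξ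

/-- Degree-`k` part of the free Lie algebra (generators of degree 1), realized as the
preimage of the degree-`k` part of the free associative algebra under the canonical map. -/
def flHomog (X : Type) (k : ℕ) : Submodule ℚ (FreeLieAlgebra ℚ X) :=
  Submodule.comap
    (FreeLieAlgebra.lift ℚ (FreeAlgebra.ι ℚ (X := X)) :
      FreeLieAlgebra ℚ X →ₗ⁅ℚ⁆ FreeAlgebra ℚ X).toLinearMap
    (homogS X k)

/-- Degree-`k` part of `edk_{m,n}`. -/
def edkHomog (m n : ℕ) (k : ℕ) : Submodule ℚ (edk m n) :=
  (((flHomog (MIdx m n) k).map (mixIdeal m n).toSubmodule.mkQ)).map (eproj m n)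

-- Fin helper lemmas
lemma castSucc_ne_of_ne {n : ℕ} {u v : Fin n} (h : u ≠ v) :
    Fin.castSucc u ≠ Fin.castSucc v := fun hh => h (Fin.castSucc_injective n hh)

lemma succ_ne_of_ne {n : ℕ} {u v : Fin n} (h : u ≠ v) :
    Fin.succ u ≠ Fin.succ v := fun hh => h (Fin.succ_injective n hh)

lemma castSucc_ne_last {n : ℕ} (u : Fin n) : Fin.castSucc u ≠ Fin.last n :=
  (Fin.castSucc_lt_last u).ne

lemma castSucc_ne_succ_of_le {n : ℕ} {u v : Fin n} (h : u ≤ v) :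
    Fin.castSucc u ≠ Fin.succ v := by
  intro hh
  have hv := congrArg Fin.val hh
  simp only [Fin.coe_castSucc, Fin.val_succ] at hv
  have := Fin.le_def.mp h
  omega

/-- `D` is the pole coface map `δ_k : dk_{m,n} → dk_{m+1,n}`, `0 ≤ k ≤ m`
(1-indexed `k`; `k = 0` is extension on the left). -/
def IsDeltaPole (m n : ℕ) (k : ℕ) (D : dkmn m n →ₗ⁅ℚ⁆ dkmn (m + 1) n) : Prop :=
  (∀ (i : Fin m) (j : Fin n),
     (((i : ℕ) + 1 < k) → D (aG i j) = aG (Fin.castSucc i) j) ∧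
     (((i : ℕ) + 1 = k) → D (aG i j) = aG (Fin.castSucc i) j + aG (Fin.succ i) j) ∧
     ((k < (i : ℕ) + 1) → D (aG i j) = aG (Fin.succ i) j)) ∧
  (∀ (u v : Fin n) (h : u ≠ v), D (cG u v h) = cG u v h)

/-- `D` is the strand coface map `δ_{m+κ} : dk_{m,n} → dk_{m,n+1}`, `1 ≤ κ ≤ n+1`
(1-indexed strand `κ`; `κ = n+1` is extension on the right). -/
def IsDeltaStrand (m n : ℕ) (κ : ℕ) (D : dkmn m n →ₗ⁅ℚ⁆ dkmn m (n + 1)) : Prop :=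
  (∀ (i : Fin m) (j : Fin n),
     (((j : ℕ) + 1 < κ) → D (aG i j) = aG i (Fin.castSucc j)) ∧
     (((j : ℕ) + 1 = κ) → D (aG i j) = aG i (Fin.castSucc j) + aG i (Fin.succ j)) ∧
     ((κ < (j : ℕ) + 1) → D (aG i j) = aG i (Fin.succ j))) ∧
  (∀ (u v : Fin n) (h : u < v),
     (((v : ℕ) + 1 < κ) →
        D (cG u v h.ne) = cG (Fin.castSucc u) (Fin.castSucc v) (castSucc_ne_of_ne h.ne)) ∧
     (((v : ℕ) + 1 = κ) →
        D (cG u v h.ne) = cG (Fin.castSucc u) (Fin.castSucc v) (castSucc_ne_of_ne h.ne)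
          + cG (Fin.castSucc u) (Fin.succ v) (castSucc_ne_succ_of_le h.le)) ∧
     (((u : ℕ) + 1 < κ ∧ κ < (v : ℕ) + 1) →
        D (cG u v h.ne) = cG (Fin.castSucc u) (Fin.succ v) (castSucc_ne_succ_of_le h.le)) ∧
     (((u : ℕ) + 1 = κ) →
        D (cG u v h.ne) = cG (Fin.castSucc u) (Fin.succ v) (castSucc_ne_succ_of_le h.le)
          + cG (Fin.succ u) (Fin.succ v) (succ_ne_of_ne h.ne)) ∧
     ((κ < (u : ℕ) + 1) →
        D (cG u v h.ne) = cG (Fin.succ u) (Fin.succ v) (succ_ne_of_ne h.ne)))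

/-- `T` is `ϑ_{m+1} : dk_{m+1,n} → dk_{m,n+1}` (the last pole becomes the first strand). -/
def IsTheta (m n : ℕ) (T : dkmn (m + 1) n →ₗ⁅ℚ⁆ dkmn m (n + 1)) : Prop :=
  (∀ (i : Fin (m + 1)) (j : Fin n),
     (∀ hi : (i : ℕ) < m, T (aG i j) = aG ⟨i, hi⟩ (Fin.succ j)) ∧
     ((i : ℕ) = m → T (aG i j) = cG 0 (Fin.succ j) (Fin.succ_ne_zero j).symm)) ∧
  (∀ (u v : Fin n) (h : u ≠ v), T (cG u v h) = cG (Fin.succ u) (Fin.succ v) (succ_ne_of_ne h))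

/-- The coface map `d_k : dk_{m,n} → dk_{m,n+1}`, built from the data of the pole
cofaces, the strand cofaces, and `ϑ_{m+1}`. -/
def coface (m n : ℕ) (Dp : ℕ → (dkmn m n →ₗ⁅ℚ⁆ dkmn (m + 1) n))
    (Ds : ℕ → (dkmn m n →ₗ⁅ℚ⁆ dkmn m (n + 1)))
    (T : dkmn (m + 1) n →ₗ⁅ℚ⁆ dkmn m (n + 1)) (k : ℕ) :
    dkmn m n →ₗ⁅ℚ⁆ dkmn m (n + 1) :=
  if k ≤ m then T.comp (Dp k) else Ds (k - m)

/-- The algebra map `ass_{m'+1} → ass_{m'}` with `x_p ↦ x_p` (`p < m'`) and `x_{m'} ↦ 0`. -/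
def setLast0A (m' : ℕ) : Ass (m' + 1) →ₐ[ℚ] Ass m' :=
  FreeAlgebra.lift ℚ fun p : Fin (m' + 1) =>
    if h : (p : ℕ) < m' then gen ⟨p, h⟩ else 0

/-- The Lie algebra map `FreeLie (Fin (m'+1)) → FreeLie (Fin m')` setting the last
generator to `0`. -/
def flSetLast0 (m' : ℕ) : FreeLieAlgebra ℚ (Fin (m' + 1)) →ₗ⁅ℚ⁆ FreeLieAlgebra ℚ (Fin m') :=
  FreeLieAlgebra.lift ℚ fun p : Fin (m' + 1) =>
    if h : (p : ℕ) < m' then FreeLieAlgebra.of ℚ ⟨p, h⟩ else 0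


/-!
Each `c_{ij}` is sent into `c`, so `[c,c]` is sent into `[c,c]` and `δ_{m+k}` descends to `edk`.
In `edk` the ideal `c` is abelian, and the 4T relations make the `a`'s act on it through
`ass_m`: `ad a_{pj}` sends `w_{ij}` to `(x_p w)_{ij}`, `ad a_{pi}` sends it to `-(w x_p)_{ij}`,
and `a_{pl}` with `l ∉ {i, j}` kills it. Consequently `[u_i, v_j] = -(η_gr(v, u))_{ij}`, and
the Leibniz-type rule `μ_gr(ab) = μ_gr(a) b + a μ_gr(b) + η_gr(a, b)` shows that
`u ↦ u_k + u_{k+1} + (μ_gr u)_{k(k+1)}` is a Lie algebra map on the free Lie algebra; it agrees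
with `δ_{m+k}(u_k)` on generators because `μ_gr(x_p) = 0`. The images of the `w_{ij}` follow by
transporting the iterated brackets generator by generator; where `a_{pk}` splits as
`a_{pk} + a_{p(k+1)}`, the cross terms vanish by the last rule.
-/

section Words

variable {N : ℕ}

theorem basisFreeMonoid_eq_wordProd (w : FreeMonoid (Fin N)) :
    FreeAlgebra.basisFreeMonoid ℚ (Fin N) w = wordProd w.toList := by
  rw [FreeAlgebra.basisFreeMonoid, Module.Basis.map_apply, Finsupp.coe_basisSingleOne,
    FreeAlgebra.equivMonoidAlgebraFreeMonoid]
  simp only [LinearEquiv.trans_symm, LinearEquiv.trans_apply]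
  erw [MonoidAlgebra.lift_single]
  rw [one_smul, show w = FreeMonoid.ofList w.toList from rfl, FreeMonoid.lift_ofList]
  rfl

theorem wordProd_nil : wordProd ([] : List (Fin N)) = 1 := rfl

theorem wordProd_cons (a : Fin N) (l : List (Fin N)) :
    wordProd (a :: l) = gen a * wordProd l := by
  simp [wordProd]

theorem wordProd_append (l r : List (Fin N)) :
    wordProd (l ++ r) = wordProd l * wordProd r := by
  simp [wordProd]

theorem wordProd_singleton (a : Fin N) : wordProd [a] = gen a := by
  simp [wordProd]

variable {A : Type} [AddCommGroup A] [Module ℚ A]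

theorem liftWord_wordProd (f : List (Fin N) → A) (l : List (Fin N)) :
    liftWord f (wordProd l) = f l := by
  rw [liftWord, ← FreeMonoid.toList_ofList l, ← basisFreeMonoid_eq_wordProd,
    Module.Basis.constr_basis]

theorem liftWord_mem {f : List (Fin N) → A} {S : Submodule ℚ A} (hf : ∀ l, f l ∈ S)
    (w : Ass N) : liftWord f w ∈ S := by
  have hw : liftWord f w ∈ LinearMap.range (liftWord f) := LinearMap.mem_range_self _ w
  rw [liftWord, Module.Basis.constr_range] at hw
  exact Submodule.span_le.mpr (Set.range_subset_iff.mpr fun x => hf _) hw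

@[elab_as_elim]
theorem Ass.induction_on {motive : Ass N → Prop} (w : Ass N)
    (word : ∀ l, motive (wordProd l))
    (add : ∀ a b, motive a → motive b → motive (a + b))
    (smul : ∀ (c : ℚ) a, motive a → motive (c • a)) : motive w := by
  have hw : w ∈ Submodule.span ℚ (Set.range (FreeAlgebra.basisFreeMonoid ℚ (Fin N))) := by
    rw [Module.Basis.span_eq]; trivial
  induction hw using Submodule.span_induction with
  | mem x hx =>
    obtain ⟨x, rfl⟩ := hx
    rw [basisFreeMonoid_eq_wordProd]
    exact word _
  | zero => simpa using smul 0 _ (word [])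
  | add x y _ _ hx hy => exact add x y hx hy
  | smul c x _ hx => exact smul c x hx

end Words

section MuEta

variable {N : ℕ}

theorem etaWord_nil_left (r : List (Fin N)) : etaWord [] r = 0 := by
  cases r <;> rfl

theorem etaWord_nil_right (l : List (Fin N)) : etaWord l [] = 0 := by
  unfold etaWord
  rcases l.getLast? with _ | a <;> rfl

theorem etaWord_concat_cons (l : List (Fin N)) (a b : Fin N) (t : List (Fin N)) :
    etaWord (l ++ [a]) (b :: t) = if a = b then -wordProd (l ++ a :: t) else 0 := by
  unfold etaWord
  rw [List.getLast?_concat, List.dropLast_concat]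

theorem etaWord_append_right (l r t : List (Fin N)) (hr : r ≠ []) :
    etaWord l (r ++ t) = etaWord l r * wordProd t := by
  obtain ⟨b, r, rfl⟩ := List.exists_cons_of_ne_nil hr
  rcases List.eq_nil_or_concat l with rfl | ⟨l, a, rfl⟩
  · rw [etaWord_nil_left, etaWord_nil_left, zero_mul]
  · rw [List.concat_eq_append, List.cons_append, etaWord_concat_cons, etaWord_concat_cons]
    split_ifs
    · rw [neg_mul, ← wordProd_append]; simp
    · rw [zero_mul]

theorem etaWord_append_left (t l r : List (Fin N)) (hl : l ≠ []) :
    etaWord (t ++ l) r = wordProd t * etaWord l r := by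
  rcases List.eq_nil_or_concat l with rfl | ⟨l, a, rfl⟩
  · exact absurd rfl hl
  rcases r with _ | ⟨b, r⟩
  · rw [etaWord_nil_right, etaWord_nil_right, mul_zero]
  · rw [List.concat_eq_append, ← List.append_assoc, etaWord_concat_cons, etaWord_concat_cons]
    split_ifs
    · rw [mul_neg, ← wordProd_append]; simp
    · rw [mul_zero]

theorem muWord_cons (a : Fin N) (l : List (Fin N)) :
    muWord (a :: l) = etaWord [a] l + gen a * muWord l := by
  rcases l with _ | ⟨b, t⟩
  · simp [muWord, etaWord_nil_right]
  · rw [muWord, ← List.nil_append [a], etaWord_concat_cons]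
    rfl

theorem muWord_append (l r : List (Fin N)) :
    muWord (l ++ r) = muWord l * wordProd r + wordProd l * muWord r + etaWord l r := by
  induction l with
  | nil => simp [muWord, wordProd_nil, etaWord_nil_left]
  | cons a l ih =>
    rw [List.cons_append, muWord_cons, ih, muWord_cons, wordProd_cons]
    rcases eq_or_ne l [] with rfl | hl
    · simp [muWord, etaWord_nil_left, etaWord_nil_right, wordProd_nil]
      abel
    · have hleft := etaWord_append_left [a] l r hl
      rw [List.singleton_append, wordProd_singleton] at hleft
      rw [etaWord_append_right [a] l r hl, hleft]
      noncomm_ring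

theorem muGr_wordProd (l : List (Fin N)) : muGr N (wordProd l) = muWord l :=
  liftWord_wordProd _ _

theorem etaGr_wordProd (l r : List (Fin N)) :
    etaGr N (wordProd l) (wordProd r) = etaWord l r := by
  rw [etaGr, liftWord_wordProd, liftWord_wordProd]

theorem muGr_mul (a b : Ass N) :
    muGr N (a * b) = muGr N a * b + a * muGr N b + etaGr N a b := by
  induction a using Ass.induction_on with
  | word l =>
    induction b using Ass.induction_on with
    | word r =>
      rw [← wordProd_append, muGr_wordProd, muGr_wordProd, muGr_wordProd, etaGr_wordProd,
        muWord_append]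
    | add b b' hb hb' =>
      simp only [mul_add, map_add, hb, hb']
      abel
    | smul c b hb => simp only [mul_smul_comm, map_smul, hb, smul_add]
  | add a a' ha ha' =>
    simp only [add_mul, map_add, LinearMap.add_apply, ha, ha']
    abel
  | smul c a ha =>
    simp only [smul_mul_assoc, map_smul, LinearMap.smul_apply, ha, smul_add]

theorem etaGr_gen_mul (a b : Ass N) (i : Fin N) :
    etaGr N a (gen i * b) = etaGr N a (gen i) * b := by
  induction a using Ass.induction_on with
  | word l =>
    induction b using Ass.induction_on with
    | word r =>
      rw [← wordProd_singleton, ← wordProd_append, etaGr_wordProd, etaGr_wordProd,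
        etaWord_append_right _ _ _ (List.cons_ne_nil i [])]
    | add b b' hb hb' => simp only [mul_add, map_add, hb, hb']
    | smul c b hb => simp only [mul_smul_comm, map_smul, hb]
  | add a a' ha ha' => simp only [map_add, LinearMap.add_apply, ha, ha', add_mul]
  | smul c a ha => simp only [map_smul, LinearMap.smul_apply, ha, smul_mul_assoc]

theorem etaGr_mul_gen (a b : Ass N) (i : Fin N) :
    etaGr N (a * gen i) b = a * etaGr N (gen i) b := by
  induction a using Ass.induction_on with
  | word l =>
    induction b using Ass.induction_on with
    | word r =>
      rw [← wordProd_singleton, ← wordProd_append, etaGr_wordProd, etaGr_wordProd,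
        etaWord_append_left _ _ _ (List.cons_ne_nil i [])]
    | add b b' hb hb' => simp only [map_add, hb, hb', mul_add]
    | smul c b hb => simp only [map_smul, hb, mul_smul_comm]
  | add a a' ha ha' => simp only [add_mul, map_add, LinearMap.add_apply, ha, ha']
  | smul c a ha => simp only [smul_mul_assoc, map_smul, LinearMap.smul_apply, ha]

end MuEta

@[elab_as_elim]
theorem FreeLieAlgebra.induction_on {R X : Type*} [CommRing R]
    {motive : FreeLieAlgebra R X → Prop} (x : FreeLieAlgebra R X)
    (zero : motive 0) (of : ∀ i, motive (FreeLieAlgebra.of R i))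
    (add : ∀ x y, motive x → motive y → motive (x + y))
    (smul : ∀ (c : R) x, motive x → motive (c • x))
    (lie : ∀ x y, motive x → motive y → motive ⁅x, y⁆) : motive x := by
  let S : LieSubalgebra R (FreeLieAlgebra R X) :=
    { carrier := {x | motive x}
      zero_mem' := zero
      add_mem' := add _ _
      smul_mem' := smul
      lie_mem' := lie _ _ }
  let g : FreeLieAlgebra R X →ₗ⁅R⁆ S := FreeLieAlgebra.lift R fun i => ⟨_, of i⟩
  have hg : S.incl.comp g = LieHom.id := FreeLieAlgebra.hom_ext fun i => by simp [g]
  have hx : (g x : FreeLieAlgebra R X) = x := LieHom.congr_fun hg x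
  exact hx ▸ (g x).2

section LieElements

variable {N : ℕ}

theorem toAssL_of (i : Fin N) : toAssL N (FreeLieAlgebra.of ℚ i) = gen i := by
  rw [toAssL, FreeLieAlgebra.lift_of_apply, gen]

theorem etaGr_toAssL_mul (U : FreeLieAlgebra ℚ (Fin N)) (a b : Ass N) :
    etaGr N a (toAssL N U * b) = etaGr N a (toAssL N U) * b := by
  induction U using FreeLieAlgebra.induction_on generalizing b with
  | zero => simp
  | of i => rw [toAssL_of, etaGr_gen_mul]
  | add x y hx hy => simp only [map_add, add_mul, hx, hy]
  | smul c x hx => simp only [map_smul, smul_mul_assoc, hx]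
  | lie x y hx hy =>
    simp only [LieHom.map_lie, Ring.lie_def, sub_mul, map_sub, mul_assoc, hx, hy]

theorem etaGr_mul_toAssL (U : FreeLieAlgebra ℚ (Fin N)) (a b : Ass N) :
    etaGr N (a * toAssL N U) b = a * etaGr N (toAssL N U) b := by
  induction U using FreeLieAlgebra.induction_on generalizing a with
  | zero => simp
  | of i => rw [toAssL_of, etaGr_mul_gen]
  | add x y hx hy => simp only [map_add, LinearMap.add_apply, mul_add, hx, hy]
  | smul c x hx => simp only [map_smul, LinearMap.smul_apply, mul_smul_comm, hx]
  | lie x y hx hy =>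
    simp only [LieHom.map_lie, Ring.lie_def, mul_sub, map_sub, LinearMap.sub_apply,
      ← mul_assoc, hx, hy]

end LieElements

namespace LieIdeal

variable {R L L' : Type*} [CommRing R] [LieRing L] [LieAlgebra R L] [LieRing L']
  [LieAlgebra R L']

def quotientMk (I : LieIdeal R L) : L →ₗ⁅R⁆ L ⧸ I :=
  { I.toSubmodule.mkQ with map_lie' := rfl }

theorem quotientMk_apply (I : LieIdeal R L) (x : L) :
    I.quotientMk x = LieSubmodule.Quotient.mk x := rfl

theorem quotientMk_surjective (I : LieIdeal R L) : Function.Surjective I.quotientMk :=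
  LieSubmodule.Quotient.surjective_mk' I

theorem quotientMk_eq_zero (I : LieIdeal R L) {x : L} (hx : x ∈ I) : I.quotientMk x = 0 :=
  (LieSubmodule.Quotient.mk_eq_zero' (N := I)).mpr hx

def quotientMap (f : L →ₗ⁅R⁆ L') {I : LieIdeal R L} {J : LieIdeal R L'}
    (h : ∀ x ∈ I, f x ∈ J) : L ⧸ I →ₗ⁅R⁆ L' ⧸ J :=
  { toLinearMap := I.toSubmodule.mapQ J.toSubmodule f.toLinearMap h
    map_lie' := by
      intro x y
      obtain ⟨x, rfl⟩ := I.quotientMk_surjective x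
      obtain ⟨y, rfl⟩ := I.quotientMk_surjective y
      rw [← LieHom.map_lie]
      show J.quotientMk (f ⁅x, y⁆) = ⁅J.quotientMk (f x), J.quotientMk (f y)⁆
      rw [LieHom.map_lie, LieHom.map_lie] }

end LieIdeal

section Relations

variable {m n : ℕ}

theorem cG_comm (u v : Fin n) (h : u ≠ v) : cG (m := m) u v h = cG v u h.symm := by
  rw [cG, cG, ← sub_eq_zero, ← LieIdeal.quotientMk_apply, ← LieIdeal.quotientMk_apply,
    ← map_sub]
  exact LieIdeal.quotientMk_eq_zero _
    (LieSubmodule.subset_lieSpan (Or.inl (Or.inl ⟨_, _, _, _, rfl⟩)))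

def edkOfFree (m n : ℕ) : FLmix m n →ₗ⁅ℚ⁆ edk m n :=
  (ccId m n).quotientMk.comp (mixIdeal m n).quotientMk

theorem edkOfFree_eq_zero {z : FLmix m n} (hz : z ∈ mixRels m n) : edkOfFree m n z = 0 := by
  rw [edkOfFree, LieHom.comp_apply,
    (mixIdeal m n).quotientMk_eq_zero (LieSubmodule.subset_lieSpan hz), map_zero]

theorem edkOfFree_tMix_comm (p q : Fin (m + n)) (h : p ≠ q)
    (hm : m ≤ (p : ℕ) ∨ m ≤ (q : ℕ)) :
    edkOfFree m n (tMix p q h hm) = edkOfFree m n (tMix q p h.symm hm.symm) := by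
  rw [← sub_eq_zero, ← map_sub]
  exact edkOfFree_eq_zero (Or.inl (Or.inl ⟨p, q, h, hm, rfl⟩))

theorem aGE_eq_edkOfFree (p : Fin m) (j : Fin n) :
    aGE p j = edkOfFree m n (tMix (Fin.castAdd n p) (Fin.natAdd m j) (castAdd_ne_natAdd p j)
      (Or.inr (natAdd_le_left m j))) := rfl

theorem cGE_eq_edkOfFree (u v : Fin n) (h : u ≠ v) :
    cGE u v h = edkOfFree m n (tMix (Fin.natAdd m u) (Fin.natAdd m v) (natAdd_ne h)
      (Or.inl (natAdd_le_left m u))) := rfl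

theorem lie_aGE_aGE_of_ne {p q : Fin m} (hpq : p ≠ q) {j j' : Fin n} (hj : j ≠ j') :
    ⁅aGE p j, aGE q j'⁆ = 0 := by
  rw [aGE_eq_edkOfFree, aGE_eq_edkOfFree, ← LieHom.map_lie]
  exact edkOfFree_eq_zero (Or.inl (Or.inr ⟨_, _, _, _, _, _, _, _,
    (Fin.castAdd_injective m n).ne hpq, castAdd_ne_natAdd p j', (castAdd_ne_natAdd q j).symm,
    natAdd_ne hj, rfl⟩))

theorem lie_aGE_cGE_of_ne (p : Fin m) {j u v : Fin n} (hju : j ≠ u) (hjv : j ≠ v)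
    (h : u ≠ v) : ⁅aGE p j, cGE (m := m) u v h⁆ = 0 := by
  rw [aGE_eq_edkOfFree, cGE_eq_edkOfFree, ← LieHom.map_lie]
  exact edkOfFree_eq_zero (Or.inl (Or.inr ⟨_, _, _, _, _, _, _, _, castAdd_ne_natAdd p u,
    castAdd_ne_natAdd p v, natAdd_ne hju, natAdd_ne hjv, rfl⟩))

theorem lie_aGE_aGE_eq_lie_aGE_cGE (p : Fin m) {u v : Fin n} (h : u ≠ v) :
    ⁅aGE p u, aGE p v⁆ = ⁅aGE p v, cGE (m := m) u v h⁆ := by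
  have h4T : ⁅aGE p u + cGE u v h, aGE p v⁆ = 0 := by
    rw [aGE_eq_edkOfFree, aGE_eq_edkOfFree, cGE_eq_edkOfFree, ← map_add, ← LieHom.map_lie]
    exact edkOfFree_eq_zero (Or.inr ⟨_, _, _, _, _, _, _, _, _, rfl⟩)
  rw [add_lie, add_eq_zero_iff_eq_neg] at h4T
  rw [h4T, lie_skew]

theorem lie_aGE_cGE_eq_neg (p : Fin m) {u v : Fin n} (h : u ≠ v) :
    ⁅aGE p u, cGE (m := m) u v h⁆ = -⁅aGE p v, cGE u v h⁆ := by
  have h4T : ⁅aGE p u + aGE p v, cGE (m := m) u v h⁆ = 0 := by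
    rw [aGE_eq_edkOfFree, aGE_eq_edkOfFree, cGE_eq_edkOfFree,
      edkOfFree_tMix_comm (Fin.castAdd n p) (Fin.natAdd m u), ← map_add, ← LieHom.map_lie]
    exact edkOfFree_eq_zero (Or.inr ⟨_, _, _, _, _, _, _, _, _, rfl⟩)
  rwa [add_lie, add_eq_zero_iff_eq_neg] at h4T

theorem eprojF_add (z z' : dkmn m n) : eprojF m n (z + z') = eprojF m n z + eprojF m n z' :=
  map_add (ccId m n).quotientMk z z'

def cIdE (m n : ℕ) : LieIdeal ℚ (edk m n) := (cId m n).map (ccId m n).quotientMk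

theorem cGE_mem_cIdE (u v : Fin n) (h : u ≠ v) : cGE u v h ∈ cIdE m n :=
  LieIdeal.mem_map (LieSubmodule.subset_lieSpan ⟨u, v, h, rfl⟩)

theorem lie_eq_zero_of_mem_cIdE {x y : edk m n} (hx : x ∈ cIdE m n) (hy : y ∈ cIdE m n) :
    ⁅x, y⁆ = 0 := by
  have hsurj := (ccId m n).quotientMk_surjective
  obtain ⟨⟨x', hx'⟩, rfl⟩ := LieIdeal.mem_map_of_surjective hsurj hx
  obtain ⟨⟨y', hy'⟩, rfl⟩ := LieIdeal.mem_map_of_surjective hsurj hy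
  rw [← LieHom.map_lie]
  exact (ccId m n).quotientMk_eq_zero (LieSubmodule.lie_mem_lie hx' hy')

end Relations

section Action

variable {m n : ℕ}

theorem adWApply_cons (j : Fin n) (p : Fin m) (l : List (Fin m)) (ξ : edk m n) :
    adWApply j (p :: l) ξ = ⁅aGE p j, adWApply j l ξ⁆ := rfl

theorem adWApply_add (j : Fin n) (l : List (Fin m)) (ξ ξ' : edk m n) :
    adWApply j l (ξ + ξ') = adWApply j l ξ + adWApply j l ξ' := by
  induction l with
  | nil => rfl
  | cons p l ih => rw [adWApply_cons, ih, lie_add, adWApply_cons, adWApply_cons]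

theorem adWApply_mem_cIdE (j : Fin n) (l : List (Fin m)) {ξ : edk m n} (hξ : ξ ∈ cIdE m n) :
    adWApply j l ξ ∈ cIdE m n := by
  induction l with
  | nil => exact hξ
  | cons p l ih => exact (cIdE m n).lie_mem ih

theorem wEl_wordProd (u v : Fin n) (h : u ≠ v) (l : List (Fin m)) :
    wEl u v h (wordProd l) = adWApply v l (cGE u v h) :=
  liftWord_wordProd _ _

theorem wEl_mem_cIdE (u v : Fin n) (h : u ≠ v) (w : Ass m) : wEl u v h w ∈ cIdE m n :=
  liftWord_mem (fun l => adWApply_mem_cIdE v l (cGE_mem_cIdE u v h)) w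

theorem adOp_add (j : Fin n) (ξ ξ' : edk m n) (w : Ass m) :
    adOp j (ξ + ξ') w = adOp j ξ w + adOp j ξ' w := by
  induction w using Ass.induction_on with
  | word l => simp only [adOp, liftWord_wordProd, adWApply_add]
  | add a b ha hb => rw [map_add, ha, hb, map_add, map_add]; abel
  | smul c a ha => rw [map_smul, ha, map_smul, map_smul, smul_add]

theorem lie_lie_aGE_aGE_eq_zero (p q : Fin m) {j v : Fin n} (hjv : j ≠ v) {ξ : edk m n}
    (hξ : ξ ∈ cIdE m n) : ⁅⁅aGE p j, aGE q v⁆, ξ⁆ = 0 := by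
  rcases eq_or_ne p q with rfl | hpq
  · rw [lie_aGE_aGE_eq_lie_aGE_cGE p hjv]
    exact lie_eq_zero_of_mem_cIdE ((cIdE m n).lie_mem (cGE_mem_cIdE j v hjv)) hξ
  · rw [lie_aGE_aGE_of_ne hpq hjv, zero_lie]

theorem lie_aGE_adWApply_of_ne (p : Fin m) {j u v : Fin n} (hju : j ≠ u) (hjv : j ≠ v)
    (h : u ≠ v) (l : List (Fin m)) : ⁅aGE p j, adWApply v l (cGE u v h)⁆ = 0 := by
  induction l with
  | nil => exact lie_aGE_cGE_of_ne p hju hjv h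
  | cons q l ih =>
    rw [adWApply_cons, leibniz_lie, ih, lie_zero, add_zero,
      lie_lie_aGE_aGE_eq_zero p q hjv (adWApply_mem_cIdE v l (cGE_mem_cIdE u v h))]

theorem lie_aGE_adWApply_left (p : Fin m) {u v : Fin n} (h : u ≠ v) (l : List (Fin m)) :
    ⁅aGE p u, adWApply v l (cGE u v h)⁆ = -adWApply v (l ++ [p]) (cGE u v h) := by
  induction l with
  | nil => exact lie_aGE_cGE_eq_neg p h
  | cons q l ih =>
    rw [adWApply_cons, leibniz_lie, ih, lie_neg,
      lie_lie_aGE_aGE_eq_zero p q h (adWApply_mem_cIdE v l (cGE_mem_cIdE u v h)), zero_add]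
    rfl

theorem lie_aGE_wEl_right (p : Fin m) {u v : Fin n} (h : u ≠ v) (w : Ass m) :
    ⁅aGE p v, wEl u v h w⁆ = wEl u v h (gen p * w) := by
  induction w using Ass.induction_on with
  | word l => rw [wEl_wordProd, ← wordProd_cons, wEl_wordProd, adWApply_cons]
  | add a b ha hb => rw [map_add, lie_add, ha, hb, mul_add, map_add]
  | smul c a ha => rw [map_smul, lie_smul, ha, mul_smul_comm, map_smul]

theorem lie_aGE_wEl_left (p : Fin m) {u v : Fin n} (h : u ≠ v) (w : Ass m) :
    ⁅aGE p u, wEl u v h w⁆ = -wEl u v h (w * gen p) := by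
  induction w using Ass.induction_on with
  | word l =>
    rw [wEl_wordProd, ← wordProd_singleton, ← wordProd_append, wEl_wordProd,
      lie_aGE_adWApply_left]
  | add a b ha hb => rw [map_add, lie_add, ha, hb, add_mul, map_add, neg_add]
  | smul c a ha => rw [map_smul, lie_smul, ha, smul_mul_assoc, map_smul, smul_neg]

theorem uEl_of (i : Fin n) (p : Fin m) : uEl i (FreeLieAlgebra.of ℚ p) = aGE p i :=
  FreeLieAlgebra.lift_of_apply _ _

theorem lie_uEl_wEl_right (U : FreeLieAlgebra ℚ (Fin m)) {u v : Fin n} (h : u ≠ v)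
    (w : Ass m) : ⁅uEl v U, wEl u v h w⁆ = wEl u v h (toAssL m U * w) := by
  induction U using FreeLieAlgebra.induction_on generalizing w with
  | zero => simp
  | of p => rw [uEl_of, toAssL_of, lie_aGE_wEl_right]
  | add x y hx hy => rw [map_add, map_add, add_lie, hx, hy, add_mul, map_add]
  | smul c x hx => rw [map_smul, map_smul, smul_lie, hx, smul_mul_assoc, map_smul]
  | lie x y hx hy =>
    rw [LieHom.map_lie, LieHom.map_lie, lie_lie, hx, hy, hx, hy, Ring.lie_def, sub_mul,
      map_sub, mul_assoc, mul_assoc]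

theorem lie_uEl_wEl_left (U : FreeLieAlgebra ℚ (Fin m)) {u v : Fin n} (h : u ≠ v)
    (w : Ass m) : ⁅uEl u U, wEl u v h w⁆ = -wEl u v h (w * toAssL m U) := by
  induction U using FreeLieAlgebra.induction_on generalizing w with
  | zero => simp
  | of p => rw [uEl_of, toAssL_of, lie_aGE_wEl_left]
  | add x y hx hy => rw [map_add, map_add, add_lie, hx, hy, mul_add, map_add, neg_add]
  | smul c x hx => rw [map_smul, map_smul, smul_lie, hx, mul_smul_comm, map_smul, smul_neg]
  | lie x y hx hy =>
    rw [LieHom.map_lie, LieHom.map_lie, lie_lie, hx, hy, lie_neg, lie_neg, hx, hy,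
      Ring.lie_def, mul_sub, map_sub, mul_assoc, mul_assoc]
    abel

theorem lie_uEl_aGE (U : FreeLieAlgebra ℚ (Fin m)) (q : Fin m) {u v : Fin n} (h : u ≠ v) :
    ⁅uEl u U, aGE q v⁆ = -wEl u v h (etaGr m (gen q) (toAssL m U)) := by
  induction U using FreeLieAlgebra.induction_on with
  | zero => simp
  | of p =>
    rw [uEl_of, toAssL_of, ← wordProd_singleton, ← wordProd_singleton, etaGr_wordProd,
      ← List.nil_append [q], etaWord_concat_cons]
    split_ifs with hqp
    · rw [hqp, lie_aGE_aGE_eq_lie_aGE_cGE p h, map_neg, neg_neg, wEl_wordProd]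
      rfl
    · rw [lie_aGE_aGE_of_ne (Ne.symm hqp) h, map_zero, neg_zero]
  | add x y hx hy => simp only [map_add, add_lie, hx, hy, neg_add]
  | smul c x hx => simp only [map_smul, smul_lie, hx, smul_neg]
  | lie x y hx hy =>
    rw [LieHom.map_lie, lie_lie, hx, hy, lie_neg, lie_neg, lie_uEl_wEl_left,
      lie_uEl_wEl_left, LieHom.map_lie, Ring.lie_def, map_sub, etaGr_toAssL_mul,
      etaGr_toAssL_mul, map_sub]
    abel

theorem lie_uEl_uEl (U V : FreeLieAlgebra ℚ (Fin m)) {u v : Fin n} (h : u ≠ v) :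
    ⁅uEl u U, uEl v V⁆ = -wEl u v h (etaGr m (toAssL m V) (toAssL m U)) := by
  induction V using FreeLieAlgebra.induction_on with
  | zero => simp
  | of q => rw [uEl_of, toAssL_of, lie_uEl_aGE U q h]
  | add x y hx hy => simp only [map_add, lie_add, LinearMap.add_apply, hx, hy, neg_add]
  | smul c x hx => simp only [map_smul, lie_smul, LinearMap.smul_apply, hx, smul_neg]
  | lie x y hx hy =>
    rw [LieHom.map_lie, leibniz_lie, hx, hy, neg_lie, lie_skew, lie_uEl_wEl_right,
      lie_neg, lie_uEl_wEl_right, LieHom.map_lie, Ring.lie_def, map_sub, LinearMap.sub_apply,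
      etaGr_mul_toAssL, etaGr_mul_toAssL, map_sub]
    abel

end Action

section Transport

variable {m n n' : ℕ}

def uElSplit (s t : Fin n) (h : s ≠ t) : FreeLieAlgebra ℚ (Fin m) →ₗ⁅ℚ⁆ edk m n :=
  { toLinearMap := (uEl s).toLinearMap + (uEl t).toLinearMap +
      wEl s t h ∘ₗ muGr m ∘ₗ (toAssL m).toLinearMap
    map_lie' := by
      intro x y
      simp only [AddHom.toFun_eq_coe, LinearMap.coe_toAddHom, LinearMap.add_apply,
        LinearMap.comp_apply, LieHom.coe_toLinearMap, add_lie, lie_add]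
      have hxy : ⁅uEl t x, uEl s y⁆ = wEl s t h (etaGr m (toAssL m x) (toAssL m y)) := by
        rw [← lie_skew, lie_uEl_uEl y x h, neg_neg]
      have hμxy : ⁅wEl s t h (muGr m (toAssL m x)), uEl s y⁆ =
          wEl s t h (muGr m (toAssL m x) * toAssL m y) := by
        rw [← lie_skew, lie_uEl_wEl_left y h, neg_neg]
      have hμxt : ⁅wEl s t h (muGr m (toAssL m x)), uEl t y⁆ =
          -wEl s t h (toAssL m y * muGr m (toAssL m x)) := by
        rw [← lie_skew, lie_uEl_wEl_right y h]
      rw [← LieHom.map_lie, ← LieHom.map_lie, lie_uEl_uEl x y h, hxy, hμxy, hμxt,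
        lie_uEl_wEl_left x h, lie_uEl_wEl_right x h,
        lie_eq_zero_of_mem_cIdE (wEl_mem_cIdE s t h _) (wEl_mem_cIdE s t h _),
        LieHom.map_lie (toAssL m) x y, Ring.lie_def, map_sub, muGr_mul, muGr_mul]
      simp only [map_add, map_sub]
      abel }

theorem uElSplit_apply (s t : Fin n) (h : s ≠ t) (U : FreeLieAlgebra ℚ (Fin m)) :
    uElSplit s t h U = uEl s U + uEl t U + wEl s t h (muGr m (toAssL m U)) := rfl

variable (F : edk m n →ₗ⁅ℚ⁆ edk m n')

theorem map_uEl {i : Fin n} {j : Fin n'} (hA : ∀ p : Fin m, F (aGE p i) = aGE p j)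
    (U : FreeLieAlgebra ℚ (Fin m)) : F (uEl i U) = uEl j U := by
  have hFU : F.comp (uEl i) = uEl j :=
    FreeLieAlgebra.hom_ext fun p => by rw [LieHom.comp_apply, uEl_of, uEl_of, hA]
  exact LieHom.congr_fun hFU U

theorem map_uEl_of_split {i : Fin n} {s t : Fin n'} (hst : s ≠ t)
    (hA : ∀ p : Fin m, F (aGE p i) = aGE p s + aGE p t) (U : FreeLieAlgebra ℚ (Fin m)) :
    F (uEl i U) = uElSplit s t hst U := by
  have hFU : F.comp (uEl i) = uElSplit s t hst :=
    FreeLieAlgebra.hom_ext fun p => by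
      rw [LieHom.comp_apply, uEl_of, hA, uElSplit_apply, uEl_of, uEl_of, toAssL_of,
        ← wordProd_singleton, muGr_wordProd, muWord, map_zero, add_zero]
  exact LieHom.congr_fun hFU U

theorem map_adWApply {v : Fin n} {v' : Fin n'} (hA : ∀ p : Fin m, F (aGE p v) = aGE p v')
    (l : List (Fin m)) (ξ : edk m n) : F (adWApply v l ξ) = adWApply v' l (F ξ) := by
  induction l with
  | nil => rfl
  | cons p l ih => rw [adWApply_cons, LieHom.map_lie, hA, ih, adWApply_cons]

theorem map_wEl {u v : Fin n} (h : u ≠ v) {v' : Fin n'}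
    (hA : ∀ p : Fin m, F (aGE p v) = aGE p v') (w : Ass m) :
    F (wEl u v h w) = adOp v' (F (cGE u v h)) w := by
  induction w using Ass.induction_on with
  | word l => rw [wEl_wordProd, map_adWApply F hA, adOp, liftWord_wordProd]
  | add a b ha hb => rw [map_add, map_add, ha, hb, map_add]
  | smul c a ha => rw [map_smul, map_smul, ha, map_smul]

theorem map_wEl_of_cGE {u v : Fin n} (h : u ≠ v) {u' v' : Fin n'}
    (hA : ∀ p : Fin m, F (aGE p v) = aGE p v') (h' : u' ≠ v')
    (hC : F (cGE u v h) = cGE u' v' h') (w : Ass m) : F (wEl u v h w) = wEl u' v' h' w := by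
  rw [map_wEl F h hA, hC]
  rfl

theorem map_wEl_of_cGE_add {u v : Fin n} (h : u ≠ v) {u₁ u₂ v' : Fin n'}
    (hA : ∀ p : Fin m, F (aGE p v) = aGE p v') (h₁ : u₁ ≠ v') (h₂ : u₂ ≠ v')
    (hC : F (cGE u v h) = cGE u₁ v' h₁ + cGE u₂ v' h₂) (w : Ass m) :
    F (wEl u v h w) = wEl u₁ v' h₁ w + wEl u₂ v' h₂ w := by
  rw [map_wEl F h hA, hC, adOp_add]
  rfl

theorem map_adWApply_of_split {v : Fin n} {r s t : Fin n'} (hrs : r ≠ s) (hrt : r ≠ t)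
    (hst : s ≠ t) (hA : ∀ p : Fin m, F (aGE p v) = aGE p s + aGE p t) {ξ : edk m n}
    (hξ : F ξ = cGE r s hrs + cGE r t hrt) (l : List (Fin m)) :
    F (adWApply v l ξ) = adWApply s l (cGE r s hrs) + adWApply t l (cGE r t hrt) := by
  induction l with
  | nil => exact hξ
  | cons p l ih =>
    rw [adWApply_cons, LieHom.map_lie, hA, ih, add_lie, lie_add, lie_add,
      lie_aGE_adWApply_of_ne p hrs.symm hst hrt, lie_aGE_adWApply_of_ne p hrt.symm hst.symm hrs,
      add_zero, zero_add, adWApply_cons, adWApply_cons]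

theorem map_wEl_of_split {u v : Fin n} (h : u ≠ v) {r s t : Fin n'} (hrs : r ≠ s)
    (hrt : r ≠ t) (hst : s ≠ t) (hA : ∀ p : Fin m, F (aGE p v) = aGE p s + aGE p t)
    (hC : F (cGE u v h) = cGE r s hrs + cGE r t hrt) (w : Ass m) :
    F (wEl u v h w) = wEl r s hrs w + wEl r t hrt w := by
  induction w using Ass.induction_on with
  | word l =>
    rw [wEl_wordProd, wEl_wordProd, wEl_wordProd, map_adWApply_of_split F hrs hrt hst hA hC]
  | add a b ha hb => rw [map_add, map_add, ha, hb, map_add, map_add]; abel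
  | smul c a ha => rw [map_smul, map_smul, ha, map_smul, map_smul, smul_add]

end Transport

section DeltaStrand

variable {m n : ℕ} {k : Fin n} {D : dkmn m n →ₗ⁅ℚ⁆ dkmn m (n + 1)}

theorem IsDeltaStrand.map_cG_mem (hD : IsDeltaStrand m n ((k : ℕ) + 1) D) {u v : Fin n}
    (h : u ≠ v) : D (cG u v h) ∈ cId m (n + 1) := by
  have mem : ∀ {u' v' : Fin (n + 1)} (h' : u' ≠ v'), cG u' v' h' ∈ cId m (n + 1) :=
    fun h' => LieSubmodule.subset_lieSpan ⟨_, _, h', rfl⟩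
  wlog huv : u < v generalizing u v
  · rw [cG_comm]
    exact this h.symm (lt_of_le_of_ne (not_lt.mp huv) h.symm)
  obtain ⟨hlt, heq, hmid, hleft, hgt⟩ := hD.2 u v huv
  rcases lt_trichotomy (v : ℕ) k with hv | hv | hv
  · rw [hlt (by omega)]; exact mem _
  · rw [heq (by omega)]; exact add_mem (mem _) (mem _)
  rcases lt_trichotomy (u : ℕ) k with hk | hk | hk
  · rw [hmid ⟨by omega, by omega⟩]; exact mem _
  · rw [hleft (by omega)]; exact add_mem (mem _) (mem _)
  · rw [hgt (by omega)]; exact mem _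

theorem IsDeltaStrand.map_mem_ccId (hD : IsDeltaStrand m n ((k : ℕ) + 1) D) :
    ∀ z ∈ ccId m n, D z ∈ ccId m (n + 1) := by
  have hc : cId m n ≤ (cId m (n + 1)).comap D := by
    rw [cId, LieSubmodule.lieSpan_le]
    rintro _ ⟨u, v, h, rfl⟩
    exact hD.map_cG_mem h
  exact fun z hz => ((LieSubmodule.mono_lie hc hc).trans (LieIdeal.comap_bracket_le D)) hz

def IsDeltaStrand.edkMap (hD : IsDeltaStrand m n ((k : ℕ) + 1) D) :
    edk m n →ₗ⁅ℚ⁆ edk m (n + 1) :=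
  LieIdeal.quotientMap D hD.map_mem_ccId

theorem IsDeltaStrand.edkMap_aGE_of_lt (hD : IsDeltaStrand m n ((k : ℕ) + 1) D) (p : Fin m)
    {j : Fin n} (hj : j < k) : hD.edkMap (aGE p j) = aGE p j.castSucc :=
  congrArg (eprojF m (n + 1)) ((hD.1 p j).1 (Nat.succ_lt_succ hj))

theorem IsDeltaStrand.edkMap_aGE_self (hD : IsDeltaStrand m n ((k : ℕ) + 1) D) (p : Fin m) :
    hD.edkMap (aGE p k) = aGE p k.castSucc + aGE p k.succ :=
  (congrArg (eprojF m (n + 1)) ((hD.1 p k).2.1 rfl)).trans (eprojF_add _ _)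

theorem IsDeltaStrand.edkMap_aGE_of_gt (hD : IsDeltaStrand m n ((k : ℕ) + 1) D) (p : Fin m)
    {j : Fin n} (hj : k < j) : hD.edkMap (aGE p j) = aGE p j.succ :=
  congrArg (eprojF m (n + 1)) ((hD.1 p j).2.2 (Nat.succ_lt_succ hj))

theorem IsDeltaStrand.edkMap_uEl (hD : IsDeltaStrand m n ((k : ℕ) + 1) D)
    (U : FreeLieAlgebra ℚ (Fin m)) (i : Fin n) :
    (i < k → hD.edkMap (uEl i U) = uEl i.castSucc U) ∧
    (i = k → hD.edkMap (uEl i U) = uEl k.castSucc U + uEl k.succ U +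
      wEl k.castSucc k.succ (castSucc_ne_succ_of_le le_rfl) (muGr m (toAssL m U))) ∧
    (k < i → hD.edkMap (uEl i U) = uEl i.succ U) := by
  refine ⟨fun hik => ?_, fun hik => ?_, fun hki => ?_⟩
  · exact map_uEl _ (fun p => hD.edkMap_aGE_of_lt p hik) U
  · subst hik
    exact map_uEl_of_split _ _ hD.edkMap_aGE_self U
  · exact map_uEl _ (fun p => hD.edkMap_aGE_of_gt p hki) U

theorem IsDeltaStrand.edkMap_wEl (hD : IsDeltaStrand m n ((k : ℕ) + 1) D) (w : Ass m)
    {u v : Fin n} (h : u < v) :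
    (v < k → hD.edkMap (wEl u v h.ne w) =
      wEl u.castSucc v.castSucc (castSucc_ne_of_ne h.ne) w) ∧
    (v = k → hD.edkMap (wEl u v h.ne w) =
      wEl u.castSucc v.castSucc (castSucc_ne_of_ne h.ne) w +
        wEl u.castSucc v.succ (castSucc_ne_succ_of_le h.le) w) ∧
    (u < k → k < v → hD.edkMap (wEl u v h.ne w) =
      wEl u.castSucc v.succ (castSucc_ne_succ_of_le h.le) w) ∧
    (u = k → hD.edkMap (wEl u v h.ne w) =
      wEl u.castSucc v.succ (castSucc_ne_succ_of_le h.le) w +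
        wEl u.succ v.succ (succ_ne_of_ne h.ne) w) ∧
    (k < u → hD.edkMap (wEl u v h.ne w) = wEl u.succ v.succ (succ_ne_of_ne h.ne) w) := by
  obtain ⟨hlt, heq, hmid, hleft, hgt⟩ := hD.2 u v h
  refine ⟨fun hvk => ?_, fun hvk => ?_, fun huk hkv => ?_, fun huk => ?_, fun hku => ?_⟩
  · exact map_wEl_of_cGE _ h.ne (fun p => hD.edkMap_aGE_of_lt p hvk) _
      (congrArg (eprojF m (n + 1)) (hlt (Nat.succ_lt_succ hvk))) w
  · subst hvk
    exact map_wEl_of_split _ h.ne _ _ (castSucc_ne_succ_of_le le_rfl) hD.edkMap_aGE_self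
      ((congrArg (eprojF m (n + 1)) (heq rfl)).trans (eprojF_add _ _)) w
  · exact map_wEl_of_cGE _ h.ne (fun p => hD.edkMap_aGE_of_gt p hkv) _
      (congrArg (eprojF m (n + 1)) (hmid ⟨Nat.succ_lt_succ huk, Nat.succ_lt_succ hkv⟩)) w
  · subst huk
    exact map_wEl_of_cGE_add _ h.ne (fun p => hD.edkMap_aGE_of_gt p h) _ _
      ((congrArg (eprojF m (n + 1)) (hleft rfl)).trans (eprojF_add _ _)) w
  · exact map_wEl_of_cGE _ h.ne (fun p => hD.edkMap_aGE_of_gt p (hku.trans h)) _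
      (congrArg (eprojF m (n + 1)) (hgt (Nat.succ_lt_succ hku))) w

end DeltaStrand

/-- `δ_{m+k}` preserves `[c,c]` and the induced map on `edk` is
given by the stated formulas (with `R = μ_gr|_{lie_m}`). -/
theorem statement10 (m n : ℕ) (k : Fin n)
    (D : dkmn m n →ₗ⁅ℚ⁆ dkmn m (n + 1))
    (hD : IsDeltaStrand m n ((k : ℕ) + 1) D) :
    (∀ z ∈ ccId m n, D z ∈ ccId m (n + 1)) ∧
    ∃ De : edk m n →ₗ⁅ℚ⁆ edk m (n + 1),
      (∀ z, De (eprojF m n z) = eprojF m (n + 1) (D z)) ∧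
      (∀ (U : FreeLieAlgebra ℚ (Fin m)) (i : Fin n),
        (i < k → De (uEl i U) = uEl (Fin.castSucc i) U) ∧
        (i = k → De (uEl i U) = uEl (Fin.castSucc k) U + uEl (Fin.succ k) U +
          wEl (Fin.castSucc k) (Fin.succ k) (castSucc_ne_succ_of_le le_rfl)
            (muGr m (toAssL m U))) ∧
        (k < i → De (uEl i U) = uEl (Fin.succ i) U)) ∧
      (∀ (w : Ass m) (u v : Fin n) (h : u < v),
        (v < k → De (wEl u v h.ne w) =
          wEl (Fin.castSucc u) (Fin.castSucc v) (castSucc_ne_of_ne h.ne) w) ∧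
        (v = k → De (wEl u v h.ne w) =
          wEl (Fin.castSucc u) (Fin.castSucc v) (castSucc_ne_of_ne h.ne) w +
            wEl (Fin.castSucc u) (Fin.succ v) (castSucc_ne_succ_of_le h.le) w) ∧
        (u < k → k < v → De (wEl u v h.ne w) =
          wEl (Fin.castSucc u) (Fin.succ v) (castSucc_ne_succ_of_le h.le) w) ∧
        (u = k → De (wEl u v h.ne w) =
          wEl (Fin.castSucc u) (Fin.succ v) (castSucc_ne_succ_of_le h.le) w +
            wEl (Fin.succ u) (Fin.succ v) (succ_ne_of_ne h.ne) w) ∧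
        (k < u → De (wEl u v h.ne w) =
          wEl (Fin.succ u) (Fin.succ v) (succ_ne_of_ne h.ne) w)) :=
  ⟨hD.map_mem_ccId, hD.edkMap, fun _ => rfl, hD.edkMap_uEl, fun w _ _ h => hD.edkMap_wEl w h⟩

end
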